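/- arXiv:2410.14754 — 2 statements merged into one kernel-verified Lean document; each statement's English description precedes it below -/
import Mathlib

section
/- For every n ≥ 1 and every k with 1 ≤ k ≤ n−1, the binomial coefficient satisfies C(n,k) ≤ sqrt(n/(2π k (n−k))) · 2^{n H₂(k/n)}. -/
noncomputable def binEntropy (x : ℝ) : ℝ :=
  -x * Real.logb 2 x - (1 - x) * Real.logb 2 (1 - x)

/-!
Write `m! = s_m √(2m) (m/e)^m`, where the Stirling ratio `s_m` decreases to `√π`. In
`C(n, k) = n! / (k! (n-k)!)` the ratio `s_n / s_k` is at most `1` and `s_{n-k} ≥ √π`, which leaves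
`√(n / (2π k (n-k))) · n^n / (k^k (n-k)^(n-k))`; the power term is exactly `2^{n H₂(k/n)}`.
-/

open Nat Stirling
open Real hiding binEntropy

theorem Stirling.stirlingSeq_le_of_le {i j : ℕ} (hi : i ≠ 0) (hij : i ≤ j) :
    stirlingSeq j ≤ stirlingSeq i := by
  obtain ⟨i, rfl⟩ := exists_eq_succ_of_ne_zero hi
  obtain ⟨j, rfl⟩ := exists_eq_succ_of_ne_zero (by omega : j ≠ 0)
  exact stirlingSeq'_antitone (succ_le_succ_iff.mp hij)

theorem Stirling.factorial_eq_stirlingSeq_mul {m : ℕ} (hm : m ≠ 0) :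
    (m ! : ℝ) = stirlingSeq m * (√(2 * m) * (m / exp 1) ^ m) := by
  have : √(2 * m) * (m / exp 1) ^ m ≠ 0 := by positivity
  rw [stirlingSeq, div_mul_cancel₀ _ this]

theorem two_rpow_mul_binEntropy {x y : ℝ} (hx : 0 < x) (hy : 0 < y) :
    (2 : ℝ) ^ ((x + y) * binEntropy (x / (x + y))) = (x + y) ^ (x + y) / (x ^ x * y ^ y) := by
  have hxy : 0 < x + y := by positivity
  have hlog : (x + y) * binEntropy (x / (x + y)) =
      logb 2 ((x + y) ^ (x + y) / (x ^ x * y ^ y)) := by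
    have hy' : 1 - x / (x + y) = y / (x + y) := by field_simp; ring
    rw [binEntropy, hy', logb_div hx.ne' hxy.ne', logb_div hy.ne' hxy.ne',
      logb_div (by positivity) (by positivity), logb_mul (by positivity) (by positivity),
      logb_rpow_eq_mul_logb_of_pos hx, logb_rpow_eq_mul_logb_of_pos hy,
      logb_rpow_eq_mul_logb_of_pos hxy]
    field_simp
    ring
  rw [hlog, rpow_logb two_pos (by norm_num) (by positivity)]

theorem choose_add_le_stirling {k b : ℕ} (hk : k ≠ 0) (hb : b ≠ 0) :
    ((k + b).choose k : ℝ) ≤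
      √((k + b : ℝ) / (2 * π * k * b)) * ((k + b : ℝ) ^ (k + b) / ((k : ℝ) ^ k * (b : ℝ) ^ b)) := by
  set n := k + b with hn_def
  have hn : n ≠ 0 := by omega
  have hn_fact : (n ! : ℝ) ≤ stirlingSeq k * (√(2 * n) * (n / exp 1) ^ n) := by
    rw [factorial_eq_stirlingSeq_mul hn]
    gcongr
    exact stirlingSeq_le_of_le hk (le_add_right k b)
  have hk_fact := factorial_eq_stirlingSeq_mul hk
  have hb_fact := le_factorial_stirling b
  have hsk : 0 < stirlingSeq k := (sqrt_pos.mpr pi_pos).trans_le (sqrt_pi_le_stirlingSeq hk)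
  calc (n.choose k : ℝ) = n ! / (k ! * b !) := by
        rw [hn_def, cast_choose ℝ (le_add_right k b), add_tsub_cancel_left]
    _ ≤ stirlingSeq k * (√(2 * n) * (n / exp 1) ^ n) /
          (stirlingSeq k * (√(2 * k) * (k / exp 1) ^ k) * (√(2 * π * b) * (b / exp 1) ^ b)) := by
        rw [← hk_fact]; gcongr
    _ = _ := by
        have hsqrt : √(2 * n) = √(n / (2 * π * k * b)) * (√(2 * k) * √(2 * π * b)) := by
          rw [← sqrt_mul (by positivity), ← sqrt_mul (by positivity)]
          congr 1
          field_simp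
        have hexp : exp 1 ^ n = exp 1 ^ k * exp 1 ^ b := pow_add _ _ _
        rw [div_pow, div_pow, div_pow, hsqrt, hexp, hn_def]
        push_cast
        field_simp

theorem binom_upper_entropy_general (n k : ℕ) (hk : 1 ≤ k) (hkn : k ≤ n - 1) :
    (n.choose k : ℝ) ≤
      Real.sqrt ((n : ℝ) / (2 * Real.pi * k * (n - k))) *
        (2 : ℝ) ^ ((n : ℝ) * binEntropy ((k : ℝ) / n)) := by
  obtain ⟨b, rfl⟩ : ∃ b, n = k + b := ⟨n - k, by omega⟩
  have hk0 : (0 : ℝ) < k := by exact_mod_cast hk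
  have hb0 : (0 : ℝ) < b := by exact_mod_cast (show 0 < b by omega)
  have hentropy := two_rpow_mul_binEntropy hk0 hb0
  rw [← cast_add, rpow_natCast, rpow_natCast, rpow_natCast] at hentropy
  rw [hentropy, cast_add, add_sub_cancel_left]
  exact choose_add_le_stirling (by omega) (by omega)

theorem binom_upper_entropy (n k : ℕ) (hn : 1 ≤ n) (hk : 1 ≤ k) (hkn : k ≤ n - 1) :
    (n.choose k : ℝ) ≤
      Real.sqrt ((n : ℝ) / (2 * Real.pi * k * (n - k))) *
        (2 : ℝ) ^ ((n : ℝ) * binEntropy ((k : ℝ) / n)) :=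
  binom_upper_entropy_general n k hk hkn
end

section
/- Suppose a random neural network with m parameters can be pruned to subnetworks of size at most γm (0 < γ ≤ 1) such that the number |𝒢| of obtainable subnetworks satisfies |𝒢| ≥ (1/2)(1/(2ε))^{d²}. Then γ m log₂(e/γ) ≥ d² log₂(1/(2ε)) − 1. -/
open Finset

/-- If the family of subnetworks, indexed by subsets of at most `γm` of the
`m` parameters, has cardinality at least `(1/2)(1/(2ε))^{d²}`, then
`γ m log₂(e/γ) ≥ d² log₂(1/(2ε)) − 1`. -/
theorem ticket_size_lower_bound (m d : ℕ) (γ ε : ℝ)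
    (hγ0 : 0 < γ) (hγ1 : γ ≤ 1) (hε : 0 < ε) (hd : 1 ≤ d)
    (G : ℕ)
    (hGle : G ≤ ∑ i ∈ Finset.Icc 1 ⌊γ * m⌋₊, m.choose i)
    (hGge : (1 / 2 : ℝ) * (1 / (2 * ε)) ^ (d ^ 2) ≤ (G : ℝ)) :
    (d : ℝ) ^ 2 * Real.logb 2 (1 / (2 * ε)) - 1
      ≤ γ * m * Real.logb 2 (Real.exp 1 / γ) := by
  have hγm0 : (0:ℝ) ≤ γ * m := by positivity
  have heγ : (0:ℝ) < Real.exp 1 / γ := by positivity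
  set k := ⌊γ * m⌋₊ with hk
  have hkγm : (k:ℝ) ≤ γ * m := Nat.floor_le hγm0
  have hkm : k ≤ m := by
    have h' : γ * (m:ℝ) ≤ (m:ℝ) := by nlinarith [Nat.cast_nonneg (α := ℝ) m]
    calc k ≤ ⌊(m:ℝ)⌋₊ := Nat.floor_le_floor h'
    _ = m := Nat.floor_natCast m
  set S : ℝ := ∑ i ∈ Finset.Icc 1 k, (m.choose i : ℝ) with hS
  -- Step 1
  have h1 : S * γ ^ (γ * m) ≤ ∑ i ∈ Finset.Icc 1 k, (m.choose i : ℝ) * γ ^ i := by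
    rw [hS, Finset.sum_mul]
    apply Finset.sum_le_sum
    intro i hi
    have hik : i ≤ k := (Finset.mem_Icc.mp hi).2
    have hiγm : (i:ℝ) ≤ γ * m := le_trans (by exact_mod_cast hik) hkγm
    have h : γ ^ (γ * m) ≤ γ ^ (i:ℝ) :=
      Real.rpow_le_rpow_of_exponent_ge hγ0 hγ1 hiγm
    rw [Real.rpow_natCast] at h
    exact mul_le_mul_of_nonneg_left h (by positivity)
  -- Step 2
  have h2 : (∑ i ∈ Finset.Icc 1 k, (m.choose i : ℝ) * γ ^ i)
      ≤ ∑ i ∈ Finset.range (m + 1), (m.choose i : ℝ) * γ ^ i := by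
    apply Finset.sum_le_sum_of_subset_of_nonneg
    · intro i hi
      exact Finset.mem_range.mpr (Nat.lt_succ_of_le (le_trans (Finset.mem_Icc.mp hi).2 hkm))
    · intro i _ _; positivity
  have h3 : (∑ i ∈ Finset.range (m + 1), (m.choose i : ℝ) * γ ^ i) = (γ + 1) ^ m := by
    rw [add_pow]
    apply Finset.sum_congr rfl
    intro i _
    rw [one_pow]; ring
  have h4 : (γ + 1) ^ m ≤ Real.exp (γ * m) := by
    have := Real.add_one_le_exp γ
    calc (γ + 1) ^ m ≤ (Real.exp γ) ^ m := by
          apply pow_le_pow_left₀ (by positivity) this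
    _ = Real.exp (γ * m) := by
          rw [← Real.exp_nat_mul]; ring_nf
  have hγpow : (0:ℝ) < γ ^ (γ * m) := Real.rpow_pos_of_pos hγ0 _
  have hS5 : S ≤ (Real.exp 1 / γ) ^ (γ * m) := by
    have heq : (Real.exp 1 / γ) ^ (γ * m) = Real.exp (γ * m) / γ ^ (γ * m) := by
      rw [Real.div_rpow (Real.exp_pos 1).le hγ0.le, Real.exp_one_rpow]
    rw [heq, le_div_iff₀ hγpow]
    calc S * γ ^ (γ * m) ≤ _ := h1
    _ ≤ _ := h2
    _ = _ := h3
    _ ≤ _ := h4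
  have hGS : (G:ℝ) ≤ S := by
    rw [hS]; exact_mod_cast hGle
  have hmain : (1 / 2 : ℝ) * (1 / (2 * ε)) ^ (d ^ 2) ≤ (Real.exp 1 / γ) ^ (γ * m) :=
    le_trans (le_trans hGge hGS) hS5
  have hXpos : (0:ℝ) < (1 / (2 * ε)) := by positivity
  have hLpos : (0:ℝ) < (1 / 2 : ℝ) * (1 / (2 * ε)) ^ (d ^ 2) := by positivity
  have hlogb := Real.logb_le_logb_of_le one_lt_two hLpos hmain
  rw [Real.logb_mul (by norm_num) (by positivity), Real.logb_pow,
    Real.logb_rpow_eq_mul_logb_of_pos heγ] at hlogb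
  have hhalf : Real.logb 2 (1/2 : ℝ) = -1 := by
    rw [show (1/2:ℝ) = 2⁻¹ by norm_num, Real.logb_inv, Real.logb_self_eq_one] <;> norm_num
  rw [hhalf] at hlogb
  push_cast at hlogb
  linarith
end
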